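/- Let M be a model of the self-referential signature logic satisfying the semantic constraints SC1–SC3, let φ be a formula with no free variables, let A, B be agents with G = {A, B}, let c be the sentence this x. (((A signs x) ∧ (B signs x)) → φ), and let H be any finite group of agents. Then at every world w of M: if M,w ⊨ (A signs c) ∧ (B signs c), then w lies in [H]ᵂ applied to the set of worlds at which G saysᵂ φ holds; here, for a set X ⊆ W, [G]X := {w ∈ W : for all A ∈ G and all w' with (w,A,w') ∈ R_says, w' ∈ X}, and [G]ᵂ X := ⋂_{k≥1} ([G])^k X. (All of society mutually agrees that the signatories mutually agree to the terms of the contract.) -/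

import Mathlib

mutual
inductive STerm (Ag Pr Vr : Type) (Op : ℕ → Type) : Type where
  | var : Vr → STerm Ag Pr Vr Op
  | agent : Ag → STerm Ag Pr Vr Op
  | op : (n : ℕ) → Op n → (Fin n → STerm Ag Pr Vr Op) → STerm Ag Pr Vr Op
  | ofFormula : SFormula Ag Pr Vr Op → STerm Ag Pr Vr Op

inductive SFormula (Ag Pr Vr : Type) (Op : ℕ → Type) : Type where
  | atom : Pr → SFormula Ag Pr Vr Op
  | neg : SFormula Ag Pr Vr Op → SFormula Ag Pr Vr Op
  | and : SFormula Ag Pr Vr Op → SFormula Ag Pr Vr Op → SFormula Ag Pr Vr Op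
  | entails : STerm Ag Pr Vr Op → SFormula Ag Pr Vr Op → SFormula Ag Pr Vr Op
  | signs : Ag → STerm Ag Pr Vr Op → SFormula Ag Pr Vr Op
  | says : Ag → SFormula Ag Pr Vr Op → SFormula Ag Pr Vr Op
  | self : Vr → SFormula Ag Pr Vr Op → SFormula Ag Pr Vr Op  -- `this x. φ`
end

namespace SFormula
variable {Ag Pr Vr : Type} {Op : ℕ → Type}
/-- `φ → ψ` abbreviates `¬(φ ∧ ¬ψ)`. -/
def imp (φ ψ : SFormula Ag Pr Vr Op) : SFormula Ag Pr Vr Op := .neg (.and φ (.neg ψ))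
/-- `φ ↔ ψ` is the usual boolean abbreviation. -/
def iff (φ ψ : SFormula Ag Pr Vr Op) : SFormula Ag Pr Vr Op := .and (φ.imp ψ) (ψ.imp φ)
end SFormula

variable {Ag Pr Vr : Type} {Op : ℕ → Type} [DecidableEq Vr]

mutual
/-- Substitution of the term `t` for the free occurrences of `x` in a term. -/
def substT (x : Vr) (t : STerm Ag Pr Vr Op) : STerm Ag Pr Vr Op → STerm Ag Pr Vr Op
  | .var y => if y = x then t else .var y
  | .agent A => .agent A
  | .op n o f => .op n o (fun i => substT x t (f i))
  | .ofFormula φ => .ofFormula (substF x t φ)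
/-- Substitution of the term `t` for the free occurrences of `x` in a formula. -/
def substF (x : Vr) (t : STerm Ag Pr Vr Op) : SFormula Ag Pr Vr Op → SFormula Ag Pr Vr Op
  | .atom p => .atom p
  | .neg φ => .neg (substF x t φ)
  | .and φ ψ => .and (substF x t φ) (substF x t ψ)
  | .entails u φ => .entails (substT x t u) (substF x t φ)
  | .signs A u => .signs A (substT x t u)
  | .says A φ => .says A (substF x t φ)
  | .self y φ => if y = x then .self y φ else .self y (substF x t φ)
end

mutual
/-- `x` occurs free in a term. -/
def FreeInT (x : Vr) : STerm Ag Pr Vr Op → Prop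
  | .var y => y = x
  | .agent _ => False
  | .op n _ f => ∃ i : Fin n, FreeInT x (f i)
  | .ofFormula φ => FreeInF x φ
/-- `x` occurs free in a formula. -/
def FreeInF (x : Vr) : SFormula Ag Pr Vr Op → Prop
  | .atom _ => False
  | .neg φ => FreeInF x φ
  | .and φ ψ => FreeInF x φ ∨ FreeInF x ψ
  | .entails u φ => FreeInT x u ∨ FreeInF x φ
  | .signs _ u => FreeInT x u
  | .says _ φ => FreeInF x φ
  | .self y φ => y ≠ x ∧ FreeInF x φ
end

/-- A sentence: a formula with no free variables. -/
def Sentence (φ : SFormula Ag Pr Vr Op) : Prop := ∀ x : Vr, ¬ FreeInF x φ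

structure SModel (Ag Pr Vr : Type) (Op : ℕ → Type) (W : Type) where
  Rsig : W → Ag → STerm Ag Pr Vr Op → Prop
  Rent : STerm Ag Pr Vr Op → W → Prop
  Rsays : W → Ag → W → Prop
  val : W → Pr → Prop

variable {W : Type}

/-- Semantic `this`-nesting depth of a formula (ignores terms). -/
def sdepth : SFormula Ag Pr Vr Op → ℕ
  | .atom _ => 0
  | .neg φ => sdepth φ
  | .and φ ψ => max (sdepth φ) (sdepth ψ)
  | .entails _ φ => sdepth φ
  | .signs _ _ => 0
  | .says _ φ => sdepth φ
  | .self _ φ => sdepth φ + 1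

/-- Size of the formula structure (ignores terms). -/
def fsize : SFormula Ag Pr Vr Op → ℕ
  | .atom _ => 1
  | .neg φ => fsize φ + 1
  | .and φ ψ => fsize φ + fsize ψ + 1
  | .entails _ φ => fsize φ + 1
  | .signs _ _ => 1
  | .says _ φ => fsize φ + 1
  | .self _ φ => fsize φ + 1

theorem sdepth_substF (x : Vr) (t : STerm Ag Pr Vr Op) :
    ∀ φ : SFormula Ag Pr Vr Op, sdepth (substF x t φ) = sdepth φ
  | .atom _ => rfl
  | .neg φ => by simp [substF, sdepth, sdepth_substF x t φ]
  | .and φ ψ => by simp [substF, sdepth, sdepth_substF x t φ, sdepth_substF x t ψ]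
  | .entails u φ => by simp [substF, sdepth, sdepth_substF x t φ]
  | .signs _ _ => rfl
  | .says _ φ => by simp [substF, sdepth, sdepth_substF x t φ]
  | .self y φ => by
      by_cases h : y = x <;> simp [substF, h, sdepth, sdepth_substF x t φ]

theorem fsize_pos : ∀ φ : SFormula Ag Pr Vr Op, 0 < fsize φ
  | .atom _ => Nat.zero_lt_one
  | .neg φ => Nat.succ_pos _
  | .and _ _ => Nat.succ_pos _
  | .entails _ _ => Nat.succ_pos _
  | .signs _ _ => Nat.zero_lt_one
  | .says _ _ => Nat.succ_pos _
  | .self _ _ => Nat.succ_pos _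

theorem lex_nat_of {a b c d : ℕ} (h : a < c ∨ (a = c ∧ b < d)) :
    Prod.Lex (fun x y : ℕ => x < y) (fun x y : ℕ => x < y) (a, b) (c, d) := by
  rcases h with h | ⟨rfl, h⟩
  · exact Prod.Lex.left _ _ h
  · exact Prod.Lex.right _ h

/-- Satisfaction for the self-referential signature logic. -/
def SatS (M : SModel Ag Pr Vr Op W) : W → SFormula Ag Pr Vr Op → Prop
  | w, .atom p => M.val w p
  | w, .neg φ => ¬ SatS M w φ
  | w, .and φ ψ => SatS M w φ ∧ SatS M w ψ
  | w, .entails t φ => ∀ w' : W, M.Rent t w' → SatS M w' φ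
  | w, .signs A t => M.Rsig w A t
  | w, .says A φ => ∀ w' : W, M.Rsays w A w' → SatS M w' φ
  | w, .self x φ => SatS M w (substF x (.ofFormula (.self x φ)) φ)
termination_by w φ => (sdepth φ, fsize φ)
decreasing_by
  all_goals simp only [sdepth, fsize, sdepth_substF]
  all_goals exact lex_nat_of (by omega)

def ValidS (M : SModel Ag Pr Vr Op W) (φ : SFormula Ag Pr Vr Op) : Prop :=
  ∀ w : W, SatS M w φ

/-- `φ` is a substitution instance of a propositional tautology. -/
def IsTautS (φ : SFormula Ag Pr Vr Op) : Prop :=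
  ∀ v : SFormula Ag Pr Vr Op → Bool,
    (∀ ψ, v (.neg ψ) = !(v ψ)) →
    (∀ ψ χ, v (.and ψ χ) = (v ψ && v χ)) →
    v φ = true

/-- Derivability in the self-referential signature logic (Ax1–Ax8, R1–R3). -/
inductive DerivS {Ag Pr Vr : Type} {Op : ℕ → Type} [DecidableEq Vr] :
    SFormula Ag Pr Vr Op → Prop where
  | ax1 {φ} : IsTautS φ → DerivS φ
  | ax2 (φ : SFormula Ag Pr Vr Op) : DerivS (.entails (.ofFormula φ) φ)
  | ax3 (t : STerm Ag Pr Vr Op) (φ ψ) :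
      DerivS (((SFormula.entails t φ).and (.entails t (φ.imp ψ))).imp (.entails t ψ))
  | ax4 (A : Ag) (t : STerm Ag Pr Vr Op) (φ) :
      DerivS (((SFormula.signs A t).and (.entails t φ)).imp (.says A φ))
  | ax5 (A : Ag) (φ ψ) :
      DerivS (((SFormula.says A φ).and (.says A (φ.imp ψ))).imp (.says A ψ))
  | ax6 (A B : Ag) (t : STerm Ag Pr Vr Op) :
      DerivS ((SFormula.signs B t).imp (.says A (.signs B t)))
  | ax7 (A : Ag) (t : STerm Ag Pr Vr Op) (φ) :
      DerivS ((SFormula.entails t φ).imp (.says A (.entails t φ)))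
  | ax8 (x : Vr) (φ : SFormula Ag Pr Vr Op) :
      DerivS ((SFormula.self x φ).iff (substF x (.ofFormula (.self x φ)) φ))
  | r1 {φ ψ} : DerivS φ → DerivS (φ.imp ψ) → DerivS ψ
  | r2 (t : STerm Ag Pr Vr Op) {φ} : DerivS φ → DerivS (.entails t φ)
  | r3 (A : Ag) {φ} : DerivS φ → DerivS (.says A φ)

/-- SC1 for the self-referential logic. -/
def SC1S (M : SModel Ag Pr Vr Op W) : Prop :=
  ∀ (φ : SFormula Ag Pr Vr Op) (w : W), M.Rent (.ofFormula φ) w → SatS M w φ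

/-- SC2 for the self-referential logic. -/
def SC2S (M : SModel Ag Pr Vr Op W) : Prop :=
  ∀ (w : W) (A : Ag) (t : STerm Ag Pr Vr Op) (w' : W),
    M.Rsig w A t → M.Rsays w A w' → M.Rent t w'

/-- SC3 for the self-referential logic. -/
def SC3S (M : SModel Ag Pr Vr Op W) : Prop :=
  ∀ (w : W) (A B : Ag) (t : STerm Ag Pr Vr Op) (w' : W),
    M.Rsig w B t → M.Rsays w A w' → M.Rsig w' B t

/-- The semantic operator `[G]` corresponding to `G says`, on sets of worlds. -/
def GStepS (M : SModel Ag Pr Vr Op W) (G : Finset Ag) (X : Set W) : Set W :=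
  {w | ∀ A ∈ G, ∀ w' : W, M.Rsays w A w' → w' ∈ X}

/-- The set of worlds of `M` at which `G says^k φ` holds (`k ≥ 1`). -/
def GSaysKS (M : SModel Ag Pr Vr Op W) (G : Finset Ag) (φ : SFormula Ag Pr Vr Op)
    (k : ℕ) : Set W :=
  (GStepS M G)^[k] {w | SatS M w φ}

/-- The set of worlds of `M` at which `G saysᵂ φ` holds. -/
def GSaysOmegaS (M : SModel Ag Pr Vr Op W) (G : Finset Ag) (φ : SFormula Ag Pr Vr Op) :
    Set W :=
  {w | ∀ k ≥ 1, w ∈ GSaysKS M G φ k}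

/-- Child relation of the semantic tree: `Child M e' e` holds when the satisfaction
expression `e'` occurs on the right-hand side of the defining clause for `e`. -/
inductive Child (M : SModel Ag Pr Vr Op W) :
    W × SFormula Ag Pr Vr Op → W × SFormula Ag Pr Vr Op → Prop where
  | neg {w φ} : Child M (w, φ) (w, .neg φ)
  | andL {w φ ψ} : Child M (w, φ) (w, .and φ ψ)
  | andR {w φ ψ} : Child M (w, ψ) (w, .and φ ψ)
  | entails {w w' t φ} : M.Rent t w' → Child M (w', φ) (w, .entails t φ)
  | says {w w' A φ} : M.Rsays w A w' → Child M (w', φ) (w, .says A φ)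
  | self {w x φ} : Child M (w, substF x (.ofFormula (.self x φ)) φ) (w, .self x φ)

/-- The semantic tree rooted at `e` has height at most `n`. -/
def HtLE (M : SModel Ag Pr Vr Op W) : ℕ → W × SFormula Ag Pr Vr Op → Prop
  | 0, e => ∀ e', ¬ Child M e' e
  | n + 1, e => ∀ e', Child M e' e → HtLE M n e'

/-- `F 0 ∧ (F 1 ∧ (⋯ ∧ F n))`: conjunction of a nonempty family of formulas. -/
def finConj : {n : ℕ} → (Fin (n + 1) → SFormula Ag Pr Vr Op) → SFormula Ag Pr Vr Op
  | 0, F => F 0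
  | _ + 1, F => .and (F 0) (finConj (fun i => F i.succ))

/-!
The worlds at which both `A` and `B` have signed the contract `c` form a set `P` that every
`says`-step preserves (SC3). From a world of `P`, an `A`- or `B`-step reaches a world that `c`
entails (SC2), hence one satisfying `c` (SC1); unfolding the self-reference there, `c` says
that the joint signature implies `φ`, so that world satisfies `φ`. Thus
`P ⊆ [{A,B}] (P ∩ ⟦φ⟧)`, which gives `P ⊆ {A,B} saysᵂ φ`, and since `P ⊆ [H] P` this
persists under every power of `[H]`.
-/

section SignedWorlds

variable {Ag Pr Vr : Type} {Op : ℕ → Type} {W : Type}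

theorem GStepS_mono (M : SModel Ag Pr Vr Op W) (G : Finset Ag) : Monotone (GStepS M G) :=
  fun _ _ hXY _ hw A hA w' hw' => hXY (hw A hA w' hw')

theorem subset_iterate_GStepS {M : SModel Ag Pr Vr Op W} {G : Finset Ag} {P X : Set W}
    (hP : P ⊆ GStepS M G P) (hX : P ⊆ X) : ∀ k, P ⊆ (GStepS M G)^[k] X
  | 0 => hX
  | k + 1 => by
      rw [Function.iterate_succ_apply']
      exact hP.trans (GStepS_mono M G (subset_iterate_GStepS hP hX k))

def cosigned (M : SModel Ag Pr Vr Op W) (A B : Ag) (t : STerm Ag Pr Vr Op) : Set W :=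
  {w | M.Rsig w A t ∧ M.Rsig w B t}

theorem cosigned_subset_GStepS {M : SModel Ag Pr Vr Op W} (h3 : SC3S M) (H : Finset Ag)
    (A B : Ag) (t : STerm Ag Pr Vr Op) : cosigned M A B t ⊆ GStepS M H (cosigned M A B t) :=
  fun _ ⟨hA, hB⟩ C _ w' hw' => ⟨h3 _ C A t w' hA hw', h3 _ C B t w' hB hw'⟩

def contract (A B : Ag) (x : Vr) (φ : SFormula Ag Pr Vr Op) : SFormula Ag Pr Vr Op :=
  .self x (((SFormula.signs A (.var x)).and (.signs B (.var x))).imp φ)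

end SignedWorlds

mutual
theorem substT_of_not_freeInT (x : Vr) (t : STerm Ag Pr Vr Op) :
    ∀ u : STerm Ag Pr Vr Op, ¬ FreeInT x u → substT x t u = u
  | .var y, h => by
      simp only [FreeInT] at h
      simp [substT, h]
  | .agent _, _ => rfl
  | .op n o f, h => by
      simp only [FreeInT, not_exists] at h
      simp only [substT]
      congr 1
      funext i
      exact substT_of_not_freeInT x t (f i) (h i)
  | .ofFormula ψ, h => by
      simp only [FreeInT] at h
      simp only [substT, substF_of_not_freeInF x t ψ h]

theorem substF_of_not_freeInF (x : Vr) (t : STerm Ag Pr Vr Op) :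
    ∀ ψ : SFormula Ag Pr Vr Op, ¬ FreeInF x ψ → substF x t ψ = ψ
  | .atom _, _ => rfl
  | .neg ψ, h => by
      simp only [FreeInF] at h
      simp only [substF, substF_of_not_freeInF x t ψ h]
  | .and ψ χ, h => by
      simp only [FreeInF, not_or] at h
      simp only [substF, substF_of_not_freeInF x t ψ h.1, substF_of_not_freeInF x t χ h.2]
  | .entails u ψ, h => by
      simp only [FreeInF, not_or] at h
      simp only [substF, substT_of_not_freeInT x t u h.1, substF_of_not_freeInF x t ψ h.2]
  | .signs _ u, h => by
      simp only [FreeInF] at h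
      simp only [substF, substT_of_not_freeInT x t u h]
  | .says _ ψ, h => by
      simp only [FreeInF] at h
      simp only [substF, substF_of_not_freeInF x t ψ h]
  | .self y ψ, h => by
      by_cases hyx : y = x
      · simp [substF, hyx]
      · simp only [FreeInF, not_and] at h
        simp [substF, hyx, substF_of_not_freeInF x t ψ (h hyx)]
end

theorem Sentence.substF_eq {φ : SFormula Ag Pr Vr Op} (hφ : Sentence φ) (x : Vr)
    (t : STerm Ag Pr Vr Op) : substF x t φ = φ :=
  substF_of_not_freeInF x t φ (hφ x)

theorem subset_GSaysOmegaS {M : SModel Ag Pr Vr Op W} {G : Finset Ag} {P : Set W}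
    {φ : SFormula Ag Pr Vr Op} (hP : P ⊆ GStepS M G (P ∩ {w | SatS M w φ})) :
    P ⊆ GSaysOmegaS M G φ := by
  intro w hw k hk
  obtain ⟨k, rfl⟩ := Nat.exists_eq_add_of_le' hk
  have hPP : P ⊆ GStepS M G P := hP.trans (GStepS_mono M G Set.inter_subset_left)
  have hPφ : P ⊆ GStepS M G {w | SatS M w φ} :=
    hP.trans (GStepS_mono M G Set.inter_subset_right)
  rw [GSaysKS, Function.iterate_succ_apply]
  exact subset_iterate_GStepS hPP hPφ k hw

theorem SatS_self_iff {M : SModel Ag Pr Vr Op W} (w : W) (x : Vr) (ψ : SFormula Ag Pr Vr Op) :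
    SatS M w (.self x ψ) ↔ SatS M w (substF x (.ofFormula (.self x ψ)) ψ) := by
  rw [SatS]

theorem SatS_contract_iff {M : SModel Ag Pr Vr Op W} {A B : Ag} {x : Vr}
    {φ : SFormula Ag Pr Vr Op} (hφ : Sentence φ) (w : W) :
    SatS M w (contract A B x φ) ↔
      (w ∈ cosigned M A B (.ofFormula (contract A B x φ)) → SatS M w φ) := by
  rw [contract, SatS_self_iff, ← contract]
  simp only [SFormula.imp, substF, substT, hφ.substF_eq, SatS, cosigned, Set.mem_ofPred_eq]
  tauto

theorem cosigned_contract_subset_GStepS [DecidableEq Ag] {M : SModel Ag Pr Vr Op W}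
    (h1 : SC1S M) (h2 : SC2S M) (h3 : SC3S M) {A B : Ag} {x : Vr} {φ : SFormula Ag Pr Vr Op}
    (hφ : Sentence φ) :
    cosigned M A B (.ofFormula (contract A B x φ)) ⊆
      GStepS M {A, B} (cosigned M A B (.ofFormula (contract A B x φ)) ∩ {w | SatS M w φ}) := by
  intro w hw C hC w' hw'
  have hw'P := cosigned_subset_GStepS h3 {A, B} A B _ hw C hC w' hw'
  have hsig : M.Rsig w C (.ofFormula (contract A B x φ)) := by
    rcases Finset.mem_insert.mp hC with rfl | hC
    · exact hw.1
    · exact (Finset.mem_singleton.mp hC) ▸ hw.2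
  have hc : SatS M w' (contract A B x φ) := h1 _ w' (h2 w C _ w' hsig hw')
  exact ⟨hw'P, (SatS_contract_iff hφ w').mp hc hw'P⟩

/-- in a model satisfying SC1–SC3, if both `A` and `B` sign the
self-referential contract `c = this x. (((A signs x) ∧ (B signs x)) → φ)`, then for any
finite group `H` of agents, `w` lies in `[H]ᵂ` applied to the set of worlds at which
`{A,B} saysᵂ φ` holds: all of society mutually agrees that the signatories mutually agree
to the terms of the contract. -/
theorem society_mutual_agreement [DecidableEq Ag] (M : SModel Ag Pr Vr Op W)
    (h1 : SC1S M) (h2 : SC2S M) (h3 : SC3S M)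
    (A B : Ag) (x : Vr) (φ : SFormula Ag Pr Vr Op) (hφ : Sentence φ)
    (c : SFormula Ag Pr Vr Op)
    (hc : c = .self x (((SFormula.signs A (.var x)).and (.signs B (.var x))).imp φ))
    (H : Finset Ag) (w : W)
    (hw : SatS M w ((SFormula.signs A (.ofFormula c)).and (.signs B (.ofFormula c)))) :
    ∀ k ≥ 1, w ∈ (GStepS M H)^[k] (GSaysOmegaS M {A, B} φ) := by
  change c = contract A B x φ at hc
  subst hc
  have hsigned : w ∈ cosigned M A B (.ofFormula (contract A B x φ)) := by
    simp only [SatS] at hw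
    exact hw
  have hagree : cosigned M A B (.ofFormula (contract A B x φ)) ⊆ GSaysOmegaS M {A, B} φ :=
    subset_GSaysOmegaS (cosigned_contract_subset_GStepS h1 h2 h3 hφ)
  exact fun k _ => subset_iterate_GStepS (cosigned_subset_GStepS h3 H A B _) hagree k hsigned
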